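/- For a single element a ∈ A, the reduced linearised coproduct of the double tensor algebra on the word a^l (the l-fold tensor power) is Δ̄(a^l) = Σ_{k=1}^{l−1} (k+1) a^k ⊗ a^{l−k}, and its (n−1)-fold left iteration satisfies Δ̄^{[n−1]}(a^n) = n! · a^{⊗n}. -/

import Mathlib

open scoped TensorProduct Classical

variable (k A : Type*) [Field k] [Ring A] [Algebra k A]

/-- The tensor algebra `T(A)` (together with the empty word), modelled as the free
`k`-module on the set of words with letters in `A`. -/
def TA (k A : Type*) [CommRing k] : Type _ := List A →₀ k

noncomputable instance : AddCommGroup (TA k A) := inferInstanceAs (AddCommGroup (List A →₀ k))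
noncomputable instance : Module k (TA k A) := inferInstanceAs (Module k (List A →₀ k))

/-- The word `a₁⋯a_n` as a basis element of `T(A)`. -/
noncomputable def wrd (l : List A) : TA k A := Finsupp.single l 1

/-- The reduced linearised coproduct on a word:
`Δ̄(a₁⋯a_n) = Σ_{I₁⊔I₂⊔I₃ = [n], I₂ ≠ ∅, I₁⊔I₃ ≠ ∅} a_{I₁I₃} ⊗ a_{I₂}`,
summed over decompositions of `[n]` into three consecutive intervals
`I₁ = {1,…,p₁}`, `I₂ = {p₁+1,…,p₁+p₂}`, `I₃ = {p₁+p₂+1,…,n}`. -/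
noncomputable def dbarWord (l : List A) : TA k A ⊗[k] TA k A :=
  ∑ p ∈ Finset.range (l.length + 1) ×ˢ Finset.range (l.length + 1),
    if 1 ≤ p.2 ∧ p.1 + p.2 ≤ l.length ∧ ¬(p.1 = 0 ∧ p.2 = l.length) then
      wrd k A (l.take p.1 ++ l.drop (p.1 + p.2)) ⊗ₜ[k] wrd k A ((l.drop p.1).take p.2)
    else 0

/-- The reduced linearised coproduct `Δ̄ : T(A) → T(A) ⊗ T(A)` as a linear map. -/
noncomputable def dbar : TA k A →ₗ[k] TA k A ⊗[k] TA k A :=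
  Finsupp.lsum k fun l =>
    LinearMap.toSpanSingleton k (TA k A ⊗[k] TA k A) (dbarWord k A l)

/-- The `q`-fold left-iterated reduced linearised coproduct
`Δ̄^{[q]} = (Δ̄^{[q-1]} ⊗ id) ∘ Δ̄ : T(A) → T(A)^{⊗(q+1)}`, `Δ̄^{[0]} = id`. -/
noncomputable def iterDbar : (q : ℕ) → (TA k A →ₗ[k] ⨂[k] (_ : Fin (q + 1)), TA k A)
  | 0 => (PiTensorProduct.subsingletonEquiv (R := k) (s := fun _ : Fin 1 => TA k A) (0 : Fin 1)).symm.toLinearMap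
  | q + 1 =>
    (PiTensorProduct.reindex k (fun _ => TA k A) finSumFinEquiv).toLinearMap.comp
      ((PiTensorProduct.tmulEquiv (R := k) (M := TA k A)).toLinearMap.comp
        ((TensorProduct.map (iterDbar q)
            (PiTensorProduct.subsingletonEquiv (R := k) (s := fun _ : Fin 1 => TA k A) (0 : Fin 1)).symm.toLinearMap).comp
          (dbar k A)))

/-!
All letters of `a^l` being equal, a term of `Δ̄(a^l)` depends only on the length `j` of its left
factor, and the outer part of length `j` can be split around the inner interval in `j + 1` ways.
In `Δ̄^{[n-1]}(a^n) = (Δ̄^{[n-2]} ⊗ id)(Δ̄(a^n))` every term with a left factor `a^j`, `j < n - 1`,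
is killed, because `Δ̄^{[q]}` vanishes on `a^j` for `1 ≤ j ≤ q`; the surviving term
`n · Δ̄^{[n-2]}(a^{n-1}) ⊗ a` gives `n!` by induction.
-/

theorem PiTensorProduct.reindex_tmulEquiv_tprod_const {R M : Type*} [CommSemiring R]
    [AddCommMonoid M] [Module R M] (p q : ℕ) (x : M) :
    reindex R (fun _ => M) finSumFinEquiv
        (tmulEquiv R M ((tprod R fun _ : Fin p => x) ⊗ₜ[R] (tprod R fun _ : Fin q => x))) =
      tprod R fun _ : Fin (p + q) => x := by
  rw [tmulEquiv_apply, Sum.elim_lam_const_lam_const, reindex_tprod]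

section

omit [Ring A] [Algebra k A]

variable {k A}

theorem dbar_wrd (l : List A) : dbar k A (wrd k A l) = dbarWord k A l :=
  (Finsupp.lsum_single k _ l 1).trans (one_smul k _)

/-- Reindexing of `dbarWord` by `j = |I₁| + |I₃|`, the length of the left factor, and `i = |I₁|`. -/
theorem dbarWord_eq_sum_Ioo_sum_range (l : List A) :
    dbarWord k A l = ∑ j ∈ Finset.Ioo 0 l.length, ∑ i ∈ Finset.range (j + 1),
      wrd k A (l.take i ++ l.drop (i + (l.length - j))) ⊗ₜ[k]
        wrd k A ((l.drop i).take (l.length - j)) := by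
  rw [dbarWord, ← Finset.sum_filter, Finset.sum_sigma']
  refine Finset.sum_nbij' (fun p => ⟨l.length - p.2, p.1⟩) (fun p => (p.2, l.length - p.1))
    ?_ ?_ ?_ ?_ ?_
  · intro p hp
    simp only [Finset.mem_filter, Finset.mem_product, Finset.mem_range] at hp
    simp only [Finset.mem_sigma, Finset.mem_Ioo, Finset.mem_range]
    omega
  · intro p hp
    simp only [Finset.mem_sigma, Finset.mem_Ioo, Finset.mem_range] at hp
    simp only [Finset.mem_filter, Finset.mem_product, Finset.mem_range]
    omega
  · intro p hp
    simp only [Finset.mem_filter, Finset.mem_product, Finset.mem_range] at hp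
    ext
    · rfl
    · simp only
      omega
  · rintro ⟨j, i⟩ hp
    simp only [Finset.mem_sigma, Finset.mem_Ioo, Finset.mem_range] at hp
    simp only [Sigma.mk.injEq, heq_eq_eq, and_true]
    omega
  · intro p hp
    simp only [Finset.mem_filter, Finset.mem_product, Finset.mem_range] at hp
    rw [Nat.sub_sub_self (by omega)]

theorem dbar_wrd_replicate (a : A) (l : ℕ) :
    dbar k A (wrd k A (List.replicate l a)) =
      ∑ j ∈ Finset.Ioo 0 l, ((j + 1 : ℕ) : k) •
        (wrd k A (List.replicate j a) ⊗ₜ[k] wrd k A (List.replicate (l - j) a)) := by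
  rw [dbar_wrd, dbarWord_eq_sum_Ioo_sum_range, List.length_replicate]
  refine Finset.sum_congr rfl fun j hj => ?_
  have summand_const : ∀ i ∈ Finset.range (j + 1),
      wrd k A ((List.replicate l a).take i ++ (List.replicate l a).drop (i + (l - j))) ⊗ₜ[k]
          wrd k A (((List.replicate l a).drop i).take (l - j)) =
        wrd k A (List.replicate j a) ⊗ₜ[k] wrd k A (List.replicate (l - j) a) := by
    intro i hi
    rw [Finset.mem_Ioo] at hj
    rw [Finset.mem_range] at hi
    rw [List.take_replicate, List.drop_replicate, List.drop_replicate, List.take_replicate,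
      ← List.replicate_add, min_eq_left (by omega), min_eq_left (by omega)]
    congr 3
    omega
  rw [Finset.sum_congr rfl summand_const, Finset.sum_const, Finset.card_range,
    Nat.cast_smul_eq_nsmul]

theorem iterDbar_zero_apply (x : TA k A) : iterDbar k A 0 x = PiTensorProduct.tprod k fun _ => x :=
  PiTensorProduct.subsingletonEquiv_symm_apply' _ x

theorem iterDbar_succ_wrd_replicate (a : A) (q l : ℕ) :
    iterDbar k A (q + 1) (wrd k A (List.replicate l a)) =
      ∑ j ∈ Finset.Ioo 0 l, ((j + 1 : ℕ) : k) •
        PiTensorProduct.reindex k (fun _ => TA k A) finSumFinEquiv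
          (PiTensorProduct.tmulEquiv k (TA k A) (iterDbar k A q (wrd k A (List.replicate j a)) ⊗ₜ[k]
            PiTensorProduct.tprod k fun _ : Fin 1 => wrd k A (List.replicate (l - j) a))) := by
  simp only [iterDbar, LinearMap.comp_apply, LinearEquiv.coe_coe, dbar_wrd_replicate, map_sum,
    map_smul, TensorProduct.map_tmul, PiTensorProduct.subsingletonEquiv_symm_apply']

theorem iterDbar_wrd_replicate_eq_zero (a : A) {q j : ℕ} (hj : 0 < j) (hjq : j ≤ q) :
    iterDbar k A q (wrd k A (List.replicate j a)) = 0 := by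
  induction q generalizing j with
  | zero => omega
  | succ q ih =>
    rw [iterDbar_succ_wrd_replicate]
    refine Finset.sum_eq_zero fun t ht => ?_
    rw [Finset.mem_Ioo] at ht
    rw [ih ht.1 (by omega), TensorProduct.zero_tmul, map_zero, map_zero, smul_zero]

theorem iterDbar_wrd_replicate (a : A) (m : ℕ) :
    iterDbar k A m (wrd k A (List.replicate (m + 1) a)) =
      ((m + 1).factorial : k) • PiTensorProduct.tprod k fun _ : Fin (m + 1) => wrd k A [a] := by
  induction m with
  | zero => rw [iterDbar_zero_apply, List.replicate_one, Nat.factorial_one, Nat.cast_one, one_smul]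
  | succ m ih =>
    rw [iterDbar_succ_wrd_replicate, Finset.sum_eq_single (m + 1)]
    · rw [ih, Nat.add_sub_cancel_left, List.replicate_one, ← TensorProduct.smul_tmul', map_smul,
        map_smul, PiTensorProduct.reindex_tmulEquiv_tprod_const, smul_smul, ← Nat.cast_mul,
        ← Nat.factorial_succ]
    · intro t ht hne
      rw [Finset.mem_Ioo] at ht
      rw [iterDbar_wrd_replicate_eq_zero a ht.1 (by omega), TensorProduct.zero_tmul, map_zero,
        map_zero, smul_zero]
    · exact fun h => absurd (Finset.mem_Ioo.2 ⟨by omega, by omega⟩) h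

end

/-- for a single `a ∈ A`, the reduced linearised coproduct satisfies
`Δ̄(a^l) = Σ_{j=1}^{l−1} (j+1) a^j ⊗ a^{l−j}`, and its left iterates satisfy
`Δ̄^{[n−1]}(a^n) = n! · a^{⊗n}` (here stated for `n = m + 1`, i.e. all `n ≥ 1`). -/
theorem dbar_replicate (a : A) :
    (∀ l : ℕ, dbar k A (wrd k A (List.replicate l a)) =
        ∑ j ∈ Finset.Ioo 0 l, ((j + 1 : ℕ) : k) •
          (wrd k A (List.replicate j a) ⊗ₜ[k] wrd k A (List.replicate (l - j) a)))
    ∧ (∀ m : ℕ, iterDbar k A m (wrd k A (List.replicate (m + 1) a)) =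
        ((m + 1).factorial : k) •
          PiTensorProduct.tprod k fun _ : Fin (m + 1) => wrd k A [a]) :=
  ⟨dbar_wrd_replicate a, iterDbar_wrd_replicate a⟩
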